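/- Let $Y$ be absolutely continuous on $(0,1)$ with density $f_Y$. Define $g: (0,1]^2 \to (0,1]$ by $g(\theta_1, \theta_2) = \tfrac12(\theta_1^2 + \theta_2^2)$, and define on $(0,1]^2$ the density $f^{BBE}(\theta_1, \theta_2) := f_Y\big(\tfrac12(\theta_1^2+\theta_2^2)\big)\, h\big(\operatorname{atan2}(\theta_2, \theta_1) \mid \sqrt{\theta_1^2+\theta_2^2}\big)$, where $h(\phi \mid r)$ is the uniform density on the set of polar angles $\phi$ such that $(r\cos\phi, r\sin\phi) \in (0,1]^2$ (i.e., $h(\phi|r) = 2/\pi$ on $(0,\pi/2)$ for $0 < r \le 1$, and $h(\phi|r) = 1/(\phi_2 - \phi_1)$ on $(\phi_1, \phi_2)$ with $\phi_1 = \operatorname{atan2}(\sqrt{r^2-1}, 1)$, $\phi_2 = \operatorname{atan2}(1, \sqrt{r^2-1})$ for $1 < r \le \sqrt 2$). Then $f^{BBE}$ is a probability density on $(0,1]^2$, and if $\Theta \sim f^{BBE}$ then $g(\Theta)$ has density $f_Y$. -/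

import Mathlib

/-!
In polar coordinates `θ = (r cos φ, r sin φ)` Lebesgue measure is `r dr dφ`, and on the square
`f^{BBE}` becomes `f_Y(r²/2) h(φ | r)`. For `r < √2`, the only radii at which `f_Y(r²/2)` can be
nonzero, `h(· | r)` is a probability density supported on the angles that keep `θ` in the
square, so integrating out `φ` leaves `r f_Y(r²/2) dr`, which is `f_Y(y) dy` under `y = r²/2`.
-/

open MeasureTheory Set Real
open scoped ENNReal

noncomputable def angleDens (r φ : ℝ) : ℝ :=
  if r ≤ 1 then
    (if 0 < φ ∧ φ < π / 2 then 2 / π else 0)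
  else
    (if Real.arctan (Real.sqrt (r ^ 2 - 1)) < φ ∧
        φ < Real.arctan (1 / Real.sqrt (r ^ 2 - 1)) then
      1 / (Real.arctan (1 / Real.sqrt (r ^ 2 - 1)) - Real.arctan (Real.sqrt (r ^ 2 - 1)))
    else 0)

/-- For `0 < r < √2`, `angleDens r` is uniform on `(minAngle r, maxAngle r)`, the angles `φ`
with `(r cos φ, r sin φ)` in the interior of the unit square. -/
noncomputable def minAngle (r : ℝ) : ℝ := if r ≤ 1 then 0 else arctan √(r ^ 2 - 1)

noncomputable def maxAngle (r : ℝ) : ℝ := if r ≤ 1 then π / 2 else arctan (1 / √(r ^ 2 - 1))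

lemma angleDens_eq_indicator (r : ℝ) :
    angleDens r = (Ioo (minAngle r) (maxAngle r)).indicator
      fun _ ↦ 1 / (maxAngle r - minAngle r) := by
  funext φ
  unfold angleDens minAngle maxAngle
  by_cases hr : r ≤ 1 <;> simp only [hr, if_true, if_false, indicator_apply, mem_Ioo]
  rw [sub_zero, one_div_div]

lemma zero_le_minAngle (r : ℝ) : 0 ≤ minAngle r := by
  unfold minAngle
  split_ifs
  · rfl
  · exact arctan_nonneg.2 (sqrt_nonneg _)

lemma maxAngle_le_pi_div_two (r : ℝ) : maxAngle r ≤ π / 2 := by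
  unfold maxAngle
  split_ifs
  · rfl
  · exact (arctan_lt_pi_div_two _).le

lemma minAngle_lt_maxAngle {r : ℝ} (hr : r ^ 2 < 2) : minAngle r < maxAngle r := by
  unfold minAngle maxAngle
  split_ifs with hr1
  · positivity
  have hs : 0 < √(r ^ 2 - 1) := sqrt_pos.2 (by nlinarith)
  have hs1 : √(r ^ 2 - 1) < 1 := (sqrt_lt' one_pos).2 (by linarith)
  exact arctan_strictMono ((lt_div_iff₀ hs).2 (by nlinarith))

lemma mul_cos_minAngle_le {r : ℝ} (hr : 0 < r) : r * cos (minAngle r) ≤ 1 := by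
  unfold minAngle
  split_ifs with hr1
  · simpa
  rw [cos_arctan, sq_sqrt (by nlinarith), add_sub_cancel, sqrt_sq hr.le,
    mul_one_div_cancel hr.ne']

lemma mul_sin_maxAngle_le {r : ℝ} (hr : 0 < r) : r * sin (maxAngle r) ≤ 1 := by
  unfold maxAngle
  split_ifs with hr1
  · simpa
  set s := √(r ^ 2 - 1)
  have hs : 0 < s := sqrt_pos.2 (by nlinarith)
  have hs2 : s ^ 2 = r ^ 2 - 1 := sq_sqrt (by nlinarith)
  have h : √(1 + (1 / s) ^ 2) = r / s := by
    rw [← sqrt_sq (div_pos hr hs).le]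
    congr 1
    field_simp
    linarith
  rw [sin_arctan, h, div_div_div_cancel_right₀ hs.ne', mul_one_div_cancel hr.ne']

lemma angleDens_nonneg (r φ : ℝ) : 0 ≤ angleDens r φ := by
  rw [angleDens_eq_indicator]
  exact indicator_nonneg (fun φ hφ ↦ one_div_nonneg.2 (sub_nonneg.2 (hφ.1.trans hφ.2).le)) φ

lemma measurable_angleDens : Measurable fun p : ℝ × ℝ ↦ angleDens p.1 p.2 := by
  unfold angleDens
  refine Measurable.ite (measurableSet_le measurable_fst measurable_const) ?_ ?_
  · refine Measurable.ite ?_ measurable_const measurable_const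
    exact (measurableSet_lt measurable_const measurable_snd).inter
      (measurableSet_lt measurable_snd measurable_const)
  · refine Measurable.ite ?_ (by fun_prop) measurable_const
    exact (measurableSet_lt (by fun_prop) measurable_snd).inter
      (measurableSet_lt measurable_snd (by fun_prop))

lemma lintegral_angleDens {r : ℝ} (hr : r ^ 2 < 2) :
    ∫⁻ φ in Ioo (-π) π, ENNReal.ofReal (angleDens r φ) = 1 := by
  have hsub : Ioo (minAngle r) (maxAngle r) ⊆ Ioo (-π) π := Ioo_subset_Ioo
    (by linarith [zero_le_minAngle r, pi_pos]) (by linarith [maxAngle_le_pi_div_two r, pi_pos])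
  have hlen : 0 < maxAngle r - minAngle r := sub_pos.2 (minAngle_lt_maxAngle hr)
  simp_rw [angleDens_eq_indicator, ← Function.comp_apply (f := ENNReal.ofReal),
    ← indicator_comp_of_zero ENNReal.ofReal_zero]
  rw [lintegral_indicator measurableSet_Ioo, Measure.restrict_restrict measurableSet_Ioo,
    inter_eq_left.2 hsub, Function.comp_def, setLIntegral_const, Real.volume_Ioo,
    ← ENNReal.ofReal_mul (by positivity), one_div_mul_cancel hlen.ne', ENNReal.ofReal_one]

lemma polar_mem_unitSquare_of_angleDens_ne_zero {r φ : ℝ} (hr : 0 < r) (h : angleDens r φ ≠ 0) :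
    (r * cos φ, r * sin φ) ∈ Ioc (0 : ℝ) 1 ×ˢ Ioc (0 : ℝ) 1 := by
  rw [angleDens_eq_indicator] at h
  obtain ⟨hmin, hmax⟩ := mem_of_indicator_ne_zero h
  have h0 : 0 < φ := (zero_le_minAngle r).trans_lt hmin
  have hπ : φ < π / 2 := hmax.trans_le (maxAngle_le_pi_div_two r)
  have hcos : r * cos φ ≤ r * cos (minAngle r) := mul_le_mul_of_nonneg_left
    (cos_le_cos_of_nonneg_of_le_pi (zero_le_minAngle r) (by linarith) hmin.le) hr.le
  have hsin : r * sin φ ≤ r * sin (maxAngle r) := mul_le_mul_of_nonneg_left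
    (sin_le_sin_of_le_of_le_pi_div_two (by linarith) (maxAngle_le_pi_div_two r) hmax.le) hr.le
  exact ⟨⟨mul_pos hr (cos_pos_of_mem_Ioo ⟨by linarith, hπ⟩),
      hcos.trans (mul_cos_minAngle_le hr)⟩,
    mul_pos hr (sin_pos_of_pos_of_lt_pi h0 (by linarith)), hsin.trans (mul_sin_maxAngle_le hr)⟩

lemma abs_lt_pi_div_two_of_cos_pos {φ : ℝ} (hφ : φ ∈ Ioo (-π) π) (hcos : 0 < cos φ) :
    |φ| < π / 2 := by
  by_contra! h
  have := cos_nonpos_of_pi_div_two_le_of_le h (by linarith [abs_lt.2 hφ, pi_pos])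
  rw [cos_abs] at this
  linarith

noncomputable def bbeDens (fY : ℝ → ℝ) (θ : ℝ × ℝ) : ℝ :=
  (Ioc (0 : ℝ) 1 ×ˢ Ioc (0 : ℝ) 1).indicator (fun θ : ℝ × ℝ ↦
    fY ((θ.1 ^ 2 + θ.2 ^ 2) / 2) * angleDens √(θ.1 ^ 2 + θ.2 ^ 2) (arctan (θ.2 / θ.1))) θ

lemma bbeDens_nonneg {fY : ℝ → ℝ} (hfY : ∀ y, 0 ≤ fY y) (θ : ℝ × ℝ) : 0 ≤ bbeDens fY θ :=
  indicator_nonneg (fun _ _ ↦ mul_nonneg (hfY _) (angleDens_nonneg _ _)) θ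

lemma measurable_bbeDens {fY : ℝ → ℝ} (hfY : Measurable fY) : Measurable (bbeDens fY) := by
  have hg : Measurable fun θ : ℝ × ℝ ↦ (θ.1 ^ 2 + θ.2 ^ 2) / 2 := by fun_prop
  have hpolar : Measurable fun θ : ℝ × ℝ ↦ (√(θ.1 ^ 2 + θ.2 ^ 2), arctan (θ.2 / θ.1)) := by
    fun_prop
  exact ((hfY.comp hg).mul (measurable_angleDens.comp hpolar)).indicator
    (measurableSet_Ioc.prod measurableSet_Ioc)

lemma polarCoord_symm_sq_add_sq (p : ℝ × ℝ) :
    (polarCoord.symm p).1 ^ 2 + (polarCoord.symm p).2 ^ 2 = p.1 ^ 2 := by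
  simp only [polarCoord_symm_apply]
  linear_combination p.1 ^ 2 * sin_sq_add_cos_sq p.2

lemma bbeDens_polarCoord_symm (fY : ℝ → ℝ) {p : ℝ × ℝ} (hp : p ∈ polarCoord.target) :
    bbeDens fY (polarCoord.symm p) = fY (p.1 ^ 2 / 2) * angleDens p.1 p.2 := by
  obtain ⟨r, φ⟩ := p
  obtain ⟨hr, hφ⟩ : 0 < r ∧ φ ∈ Ioo (-π) π := hp
  have hsq := polarCoord_symm_sq_add_sq (r, φ)
  rw [bbeDens]
  by_cases hmem : polarCoord.symm (r, φ) ∈ Ioc (0 : ℝ) 1 ×ˢ Ioc (0 : ℝ) 1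
  · rw [indicator_of_mem hmem, hsq, sqrt_sq hr.le]
    -- on the square `θ.1 > 0`, so `arctan (θ.2 / θ.1)` is the polar angle
    have hcos : 0 < cos φ := pos_of_mul_pos_right hmem.1.1 hr.le
    obtain ⟨hφ₁, hφ₂⟩ := abs_lt.1 (abs_lt_pi_div_two_of_cos_pos hφ hcos)
    simp only [polarCoord_symm_apply, mul_div_mul_left _ _ hr.ne', ← tan_eq_sin_div_cos,
      arctan_tan hφ₁ hφ₂]
  · rw [indicator_of_notMem hmem,
      not_imp_comm.1 (polar_mem_unitSquare_of_angleDens_ne_zero hr) hmem, mul_zero]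

lemma lintegral_Ioi_mul_comp_sq_div_two (G : ℝ → ℝ≥0∞) :
    ∫⁻ r in Ioi 0, ENNReal.ofReal r * G (r ^ 2 / 2) = ∫⁻ y in Ioi 0, G y := by
  have himage : (fun r : ℝ ↦ r ^ 2 / 2) '' Ioi 0 = Ioi 0 := by
    refine Subset.antisymm (image_subset_iff.2 fun r hr ↦ by
      simp only [mem_preimage, mem_Ioi] at hr ⊢
      positivity) fun y hy ↦ ⟨√(2 * y), sqrt_pos.2 (by simp_all), by
        show √(2 * y) ^ 2 / 2 = y
        rw [sq_sqrt (by simp_all; linarith)]; ring⟩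
  have hderiv : ∀ r ∈ Ioi (0 : ℝ), HasDerivWithinAt (fun r : ℝ ↦ r ^ 2 / 2) r (Ioi 0) r := by
    intro r _
    simpa using ((hasDerivAt_pow 2 r).div_const 2).hasDerivWithinAt
  have hinj : InjOn (fun r : ℝ ↦ r ^ 2 / 2) (Ioi 0) := fun a ha b hb hab ↦ by
    simp only [mem_Ioi] at ha hb hab
    nlinarith
  conv_rhs =>
    rw [← himage, lintegral_image_eq_lintegral_abs_deriv_mul measurableSet_Ioi hderiv hinj]
  exact setLIntegral_congr_fun measurableSet_Ioi fun r hr ↦ by rw [abs_of_pos hr]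

lemma lintegral_bbeDens_mul_eq_radial {fY : ℝ → ℝ} (hfY : Measurable fY)
    (hfY_supp : ∀ y, 1 ≤ y → fY y = 0) {F : ℝ → ℝ≥0∞} (hF : Measurable F) :
    ∫⁻ θ, ENNReal.ofReal (bbeDens fY θ) * F ((θ.1 ^ 2 + θ.2 ^ 2) / 2) =
      ∫⁻ r in Ioi 0, ENNReal.ofReal r * (ENNReal.ofReal (fY (r ^ 2 / 2)) * F (r ^ 2 / 2)) := by
  have hpolar : ∀ p ∈ polarCoord.target, ENNReal.ofReal p.1 •
      (ENNReal.ofReal (bbeDens fY (polarCoord.symm p)) *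
        F (((polarCoord.symm p).1 ^ 2 + (polarCoord.symm p).2 ^ 2) / 2)) =
      ENNReal.ofReal p.1 * (ENNReal.ofReal (fY (p.1 ^ 2 / 2)) * F (p.1 ^ 2 / 2)) *
        ENNReal.ofReal (angleDens p.1 p.2) := fun p hp ↦ by
    rw [bbeDens_polarCoord_symm fY hp, polarCoord_symm_sq_add_sq,
      ENNReal.ofReal_mul' (angleDens_nonneg _ _), smul_eq_mul]
    ring
  have hmeas : Measurable fun p : ℝ × ℝ ↦
      ENNReal.ofReal p.1 * (ENNReal.ofReal (fY (p.1 ^ 2 / 2)) * F (p.1 ^ 2 / 2)) *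
        ENNReal.ofReal (angleDens p.1 p.2) := by
    have hsq : Measurable fun p : ℝ × ℝ ↦ p.1 ^ 2 / 2 := by fun_prop
    exact (ENNReal.measurable_ofReal.comp measurable_fst).mul
      ((ENNReal.measurable_ofReal.comp (hfY.comp hsq)).mul (hF.comp hsq)) |>.mul
      (ENNReal.measurable_ofReal.comp measurable_angleDens)
  rw [← lintegral_comp_polarCoord_symm,
    setLIntegral_congr_fun polarCoord.open_target.measurableSet hpolar, polarCoord_target,
    Measure.volume_eq_prod, setLIntegral_prod _ hmeas.aemeasurable]
  refine setLIntegral_congr_fun measurableSet_Ioi fun r _ ↦ ?_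
  have hmeas_r : Measurable fun φ ↦ ENNReal.ofReal (angleDens r φ) :=
    (measurable_angleDens.comp measurable_prodMk_left).ennreal_ofReal
  dsimp only
  rw [lintegral_const_mul _ hmeas_r]
  by_cases hr2 : r ^ 2 < 2
  · rw [lintegral_angleDens hr2, mul_one]
  · rw [hfY_supp _ (by linarith), ENNReal.ofReal_zero, zero_mul, mul_zero, zero_mul]

lemma map_withDensity_bbeDens {fY : ℝ → ℝ} (hfY : Measurable fY)
    (hfY_supp : ∀ y, y ∉ Ioo (0 : ℝ) 1 → fY y = 0) :
    Measure.map (fun θ : ℝ × ℝ ↦ (θ.1 ^ 2 + θ.2 ^ 2) / 2)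
        (volume.withDensity fun θ ↦ ENNReal.ofReal (bbeDens fY θ)) =
      volume.withDensity fun y ↦ ENNReal.ofReal (fY y) := by
  have hg : Measurable fun θ : ℝ × ℝ ↦ (θ.1 ^ 2 + θ.2 ^ 2) / 2 := by fun_prop
  refine Measure.ext_of_lintegral _ fun F hF ↦ ?_
  have hFg : Measurable fun θ : ℝ × ℝ ↦ F ((θ.1 ^ 2 + θ.2 ^ 2) / 2) := hF.comp hg
  rw [lintegral_map hF hg,
    lintegral_withDensity_eq_lintegral_mul _ (measurable_bbeDens hfY).ennreal_ofReal hFg,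
    lintegral_withDensity_eq_lintegral_mul _ hfY.ennreal_ofReal hF]
  simp only [Pi.mul_apply]
  rw [lintegral_bbeDens_mul_eq_radial hfY (fun y hy ↦ hfY_supp y fun h ↦ by linarith [h.2]) hF,
    lintegral_Ioi_mul_comp_sq_div_two (fun y ↦ ENNReal.ofReal (fY y) * F y),
    setLIntegral_eq_of_support_subset]
  refine Function.support_subset_iff'.2 fun y hy ↦ ?_
  rw [hfY_supp y fun h ↦ hy h.1, ENNReal.ofReal_zero, zero_mul]

/-- the BBE density
`f^{BBE}(θ₁,θ₂) = f_Y((θ₁²+θ₂²)/2) · h(atan2(θ₂,θ₁) | √(θ₁²+θ₂²))` is a probability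
density on `(0,1]²`, and if `Θ ∼ f^{BBE}` then `g(Θ) = (Θ₁²+Θ₂²)/2` has density `f_Y`. -/
theorem stmt13
    (fY : ℝ → ℝ)
    (hfY_meas : Measurable fY)
    (hfY_nonneg : ∀ y, 0 ≤ fY y)
    (hfY_supp : ∀ y, y ∉ Ioo (0:ℝ) 1 → fY y = 0)
    (hfY_int : ∫ y, fY y = 1)
    (S : Set (ℝ × ℝ)) (hS : S = Ioc (0:ℝ) 1 ×ˢ Ioc (0:ℝ) 1)
    (fBBE : ℝ × ℝ → ℝ)
    (hfBBE : ∀ θ : ℝ × ℝ, fBBE θ =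
      Set.indicator S (fun θ : ℝ × ℝ =>
        fY ((θ.1 ^ 2 + θ.2 ^ 2) / 2) *
          angleDens (Real.sqrt (θ.1 ^ 2 + θ.2 ^ 2)) (Real.arctan (θ.2 / θ.1))) θ) :
    (∀ θ, 0 ≤ fBBE θ) ∧ (∀ θ, θ ∉ S → fBBE θ = 0) ∧ (∫ θ, fBBE θ = 1) ∧
      Measure.map (fun θ : ℝ × ℝ => (θ.1 ^ 2 + θ.2 ^ 2) / 2)
          (volume.withDensity fun θ => ENNReal.ofReal (fBBE θ))
        = volume.withDensity fun y => ENNReal.ofReal (fY y) := by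
  subst hS
  obtain rfl : fBBE = bbeDens fY := funext hfBBE
  have hmap := map_withDensity_bbeDens hfY_meas hfY_supp
  have hmass : ∫⁻ θ, ENNReal.ofReal (bbeDens fY θ) = ∫⁻ y, ENNReal.ofReal (fY y) := by
    simpa [Measure.map_apply (by fun_prop : Measurable fun θ : ℝ × ℝ ↦ (θ.1 ^ 2 + θ.2 ^ 2) / 2)
      MeasurableSet.univ] using congrArg (· univ) hmap
  refine ⟨bbeDens_nonneg hfY_nonneg, fun θ hθ ↦ indicator_of_notMem hθ _, ?_, hmap⟩
  rw [integral_eq_lintegral_of_nonneg_ae (ae_of_all _ (bbeDens_nonneg hfY_nonneg))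
      (measurable_bbeDens hfY_meas).aestronglyMeasurable, hmass,
    ← ofReal_integral_eq_lintegral_ofReal (Integrable.of_integral_ne_zero (by simp [hfY_int]))
      (ae_of_all _ hfY_nonneg), hfY_int, ENNReal.toReal_ofReal zero_le_one]
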